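/- Let m, n be positive integers, let W be a fixed real m×n matrix, let α > 0 and γ > 0, and let x be a random vector in ℝⁿ whose coordinates are independent standard Gaussian random variables. Set y = γ · W · (αIₙ + WᵀW)^{-1/2} · x. Then E[‖y‖²] = γ² · (m − α · tr((αIₘ + WWᵀ)⁻¹)). -/

import Mathlib

/-!
Coordinates of a standard Gaussian vector are independent, centred and of unit variance, so
`E[x j * x k] = δ j k` and `E ‖A x‖² = tr (Aᵀ A)`. For `A = γ W R⁻¹` with `R` symmetric this is
`γ² tr (W (α I + Wᵀ W)⁻¹ Wᵀ)`, and the push-through identity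
`W (α I + Wᵀ W)⁻¹ = (α I + W Wᵀ)⁻¹ W` turns `W (α I + Wᵀ W)⁻¹ Wᵀ` into `I - α (α I + W Wᵀ)⁻¹`.
-/

open Matrix MeasureTheory ProbabilityTheory

lemma sum_mulVec_sq_eq_sum_transpose_mul_self {ι κ : Type*} [Fintype ι] [Fintype κ]
    (A : Matrix κ ι ℝ) (x : ι → ℝ) :
    ∑ i, (A *ᵥ x) i ^ 2 = ∑ j, ∑ k, (Aᵀ * A) j k * (x j * x k) := by
  simp only [sq, mulVec, dotProduct, mul_apply, transpose_apply, Finset.sum_mul, Finset.mul_sum]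
  rw [Finset.sum_comm]
  refine Finset.sum_congr rfl fun j _ => ?_
  rw [Finset.sum_comm]
  exact Finset.sum_congr rfl fun k _ => Finset.sum_congr rfl fun i _ => by ring

section IsotropicProduct

variable {ι : Type*} [Fintype ι] {μ : Measure ℝ} [IsProbabilityMeasure μ]

lemma integral_eval_mul_eval_pi [DecidableEq ι] (hmean : ∫ t, t ∂μ = 0) (j k : ι) :
    ∫ x, x j * x k ∂(Measure.pi fun _ : ι => μ) = if j = k then ∫ t, t ^ 2 ∂μ else 0 := by
  split_ifs with hjk
  · subst hjk
    simp_rw [← sq]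
    exact integral_comp_eval (μ := fun _ : ι => μ) (f := fun t : ℝ => t ^ 2) (by fun_prop)
  · have hindep : IndepFun (fun x : ι → ℝ => x j) (fun x => x k) (Measure.pi fun _ => μ) :=
      (iIndepFun_pi (X := fun _ => id) fun _ => aemeasurable_id).indepFun hjk
    rw [hindep.integral_fun_mul_eq_mul_integral (measurable_pi_apply j).aestronglyMeasurable
      (measurable_pi_apply k).aestronglyMeasurable]
    simp [integral_eval, hmean]

lemma integrable_eval_mul_eval_pi (hμ : MemLp id 2 μ) (j k : ι) :
    Integrable (fun x => x j * x k) (Measure.pi fun _ : ι => μ) := by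
  have hL2 : ∀ i, MemLp (fun x : ι → ℝ => x i) 2 (Measure.pi fun _ : ι => μ) := fun i =>
    hμ.comp_measurePreserving (measurePreserving_eval _ i)
  exact (hL2 j).integrable_mul (hL2 k)

theorem integral_sum_mulVec_sq_pi {κ : Type*} [Fintype κ] (hμ : MemLp id 2 μ)
    (hmean : ∫ t, t ∂μ = 0) (A : Matrix κ ι ℝ) :
    ∫ x, ∑ i, (A *ᵥ x) i ^ 2 ∂(Measure.pi fun _ : ι => μ) = (∫ t, t ^ 2 ∂μ) * (Aᵀ * A).trace := by
  classical
  simp_rw [sum_mulVec_sq_eq_sum_transpose_mul_self]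
  have hint : ∀ j k, Integrable (fun x : ι → ℝ => (Aᵀ * A) j k * (x j * x k))
      (Measure.pi fun _ => μ) := fun j k => (integrable_eval_mul_eval_pi hμ j k).const_mul _
  rw [integral_finsetSum _ fun j _ => integrable_finsetSum _ fun k _ => hint j k]
  simp_rw [integral_finsetSum _ fun k _ => hint _ k, integral_const_mul,
    integral_eval_mul_eval_pi hmean]
  simp [trace, Finset.sum_mul, mul_comm]

end IsotropicProduct

lemma integral_sq_gaussianReal_zero (v : NNReal) : ∫ t, t ^ 2 ∂gaussianReal 0 v = v := by
  have h := variance_of_integral_eq_zero (μ := gaussianReal 0 v) aemeasurable_id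
    integral_id_gaussianReal
  rw [variance_id_gaussianReal] at h
  simpa using h.symm

section PushThrough

variable {𝕜 m n : Type*} [CommRing 𝕜] [Fintype m] [Fintype n] [DecidableEq m] [DecidableEq n]

theorem mul_inv_smul_one_add_transpose_mul_self_mul_transpose (W : Matrix m n 𝕜) (α : 𝕜)
    (hS : IsUnit (α • (1 : Matrix n n 𝕜) + Wᵀ * W).det)
    (hT : IsUnit (α • (1 : Matrix m m 𝕜) + W * Wᵀ).det) :
    W * (α • 1 + Wᵀ * W)⁻¹ * Wᵀ = 1 - α • (α • 1 + W * Wᵀ)⁻¹ := by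
  set S : Matrix n n 𝕜 := α • 1 + Wᵀ * W
  set T : Matrix m m 𝕜 := α • 1 + W * Wᵀ
  have hcomm : T * W = W * S := by
    simp only [T, S, Matrix.add_mul, Matrix.mul_add, Matrix.smul_mul, Matrix.mul_smul,
      Matrix.one_mul, Matrix.mul_one, Matrix.mul_assoc]
  have hpush : W * S⁻¹ = T⁻¹ * W := calc
    W * S⁻¹ = T⁻¹ * (T * W) * S⁻¹ := by
        rw [← Matrix.mul_assoc, nonsing_inv_mul _ hT, Matrix.one_mul]
    _ = T⁻¹ * W := by simp only [hcomm, Matrix.mul_assoc, mul_nonsing_inv _ hS, Matrix.mul_one]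
  calc W * S⁻¹ * Wᵀ = T⁻¹ * (T - α • 1) := by
        rw [hpush, Matrix.mul_assoc, add_sub_cancel_left]
    _ = 1 - α • T⁻¹ := by
        rw [Matrix.mul_sub, nonsing_inv_mul _ hT, Matrix.mul_smul, Matrix.mul_one]

end PushThrough

lemma posDef_smul_one_add_transpose_mul_self {m n : Type*} [Fintype m] [Fintype n]
    [DecidableEq n] (W : Matrix m n ℝ) {α : ℝ} (hα : 0 < α) :
    (α • (1 : Matrix n n ℝ) + Wᵀ * W).PosDef :=
  (PosDef.one.smul hα).add_posSemidef (by simpa using posSemidef_conjTranspose_mul_self W)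

theorem stmt_7_general (m n : ℕ)
    (W : Matrix (Fin m) (Fin n) ℝ) (α γ : ℝ) (hα : 0 < α)
    (R : Matrix (Fin n) (Fin n) ℝ) (hR : R.PosDef)
    (hRsq : R * R = α • (1 : Matrix (Fin n) (Fin n) ℝ) + Wᵀ * W) :
    ∫ x : Fin n → ℝ, (∑ i : Fin m, ((γ • (W * R⁻¹)).mulVec x i) ^ 2)
        ∂(Measure.pi fun _ : Fin n => gaussianReal 0 1) =
      γ ^ 2 * ((m : ℝ) - α * ((α • (1 : Matrix (Fin m) (Fin m) ℝ) + W * Wᵀ)⁻¹).trace) := by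
  have hS := (posDef_smul_one_add_transpose_mul_self W hα).det_pos.ne'.isUnit
  have hT := (posDef_smul_one_add_transpose_mul_self Wᵀ hα).det_pos.ne'.isUnit
  rw [transpose_transpose] at hT
  have hRT : Rᵀ = R := hR.isHermitian
  have hgram : ((W * R⁻¹)ᵀ * (W * R⁻¹)).trace = (W * (R * R)⁻¹ * Wᵀ).trace := by
    rw [transpose_mul, transpose_nonsing_inv, hRT, trace_mul_comm, Matrix.mul_inv_rev]
    simp only [Matrix.mul_assoc]
  rw [integral_sum_mulVec_sq_pi (memLp_id_gaussianReal 2) integral_id_gaussianReal,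
    integral_sq_gaussianReal_zero, transpose_smul, Matrix.smul_mul, Matrix.mul_smul, smul_smul,
    trace_smul, hgram, hRsq,
    mul_inv_smul_one_add_transpose_mul_self_mul_transpose W α hS hT, trace_sub, trace_one,
    trace_smul]
  simp [sq]

/-- Let `W` be a fixed real `m × n` matrix, `α, γ > 0`, and let `x` be a
random vector in `ℝⁿ` with independent standard Gaussian coordinates. With
`y = γ • W * R⁻¹ • x`, where `R` is the (unique) positive-definite square root of
`α Iₙ + Wᵀ W`, one has `E[‖y‖²] = γ² (m - α tr ((α Iₘ + W Wᵀ)⁻¹))`, where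
`‖y‖² = ∑ i, y i ^ 2` is the squared Euclidean norm. -/
theorem stmt_7 (m n : ℕ) (hm : 0 < m) (hn : 0 < n)
    (W : Matrix (Fin m) (Fin n) ℝ) (α γ : ℝ) (hα : 0 < α) (hγ : 0 < γ)
    (R : Matrix (Fin n) (Fin n) ℝ) (hR : R.PosDef)
    (hRsq : R * R = α • (1 : Matrix (Fin n) (Fin n) ℝ) + Wᵀ * W) :
    ∫ x : Fin n → ℝ, (∑ i : Fin m, ((γ • (W * R⁻¹)).mulVec x i) ^ 2)
        ∂(Measure.pi fun _ : Fin n => gaussianReal 0 1) =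
      γ ^ 2 * ((m : ℝ) - α * ((α • (1 : Matrix (Fin m) (Fin m) ℝ) + W * Wᵀ)⁻¹).trace) :=
  stmt_7_general m n W α γ hα R hR hRsq
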